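/- arXiv:1405.3922 — 5 statements merged into one kernel-verified Lean document; each statement's English description precedes it below -/
import Mathlib

section
/- Let 0<α≤1 and C₀>0, and suppose f:ℝ²→ℝ satisfies ‖f‖_{C^{0,α}(ℝ²)}≤C₀. Then for every γ∈ℝ and 0<ε<1 the mean M_{φ,ε,γ}[f] is Hölder continuous on ℝ with |M_{φ,ε,γ}[f](x) − M_{φ,ε,γ}[f](x')| ≤ √2·C₀·|x−x'|^α for all x,x'∈ℝ. -/
open MeasureTheory Set

/-- The mean `M_{φ,ε,γ}[f](x)`: convolution of `f(x,·)` with `φ_{ε|x|}` at `γ`,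
with the convention `M_{φ,ε,γ}[f](0) = f(0,γ)`. -/
noncomputable def mean (φ : ℝ → ℝ) (ε γ : ℝ) (f : ℝ → ℝ → ℝ) (x : ℝ) : ℝ :=
  if x = 0 then f 0 γ
  else ∫ y : ℝ, f x y * ((ε * |x|)⁻¹ * φ ((γ - y) / (ε * |x|)))

theorem stmt1 (α C₀ : ℝ) (hα : 0 < α) (hα1 : α ≤ 1) (hC₀ : 0 < C₀)
    (f : ℝ → ℝ → ℝ)
    (hf : ∀ x y x' y', |f x y - f x' y'| ≤ C₀ * (Real.sqrt ((x - x')^2 + (y - y')^2))^α)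
    (φ : ℝ → ℝ) (hφsm : ContDiff ℝ (⊤ : ℕ∞) φ)
    (hφsupp : Function.support φ ⊆ Icc (-1 : ℝ) 1)
    (hφpos : ∀ t, 0 ≤ φ t) (hφeven : ∀ t, φ (-t) = φ t)
    (hφint : (∫ t : ℝ, φ t) = 1)
    (γ ε : ℝ) (hε : 0 < ε) (hε1 : ε < 1) :
    ∀ x x' : ℝ, |mean φ ε γ f x - mean φ ε γ f x'| ≤ Real.sqrt 2 * C₀ * |x - x'|^α := by
  -- `f x ·` is continuous for every `x`
  have hfc : ∀ x : ℝ, Continuous (fun y => f x y) := by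
    intro x
    rw [continuous_iff_continuousAt]
    intro a
    rw [ContinuousAt, tendsto_iff_dist_tendsto_zero]
    have hb : Filter.Tendsto (fun y : ℝ => C₀ * Real.sqrt ((x - x)^2 + (y - a)^2) ^ α)
        (nhds a) (nhds 0) := by
      have h1 : Filter.Tendsto (fun y : ℝ => Real.sqrt ((x - x)^2 + (y - a)^2))
          (nhds a) (nhds 0) := by
        have hc : Continuous (fun y : ℝ => Real.sqrt ((x - x)^2 + (y - a)^2)) := by fun_prop
        have := hc.tendsto a
        simpa using this
      have h2 : Filter.Tendsto (fun s : ℝ => s ^ α) (nhds (0:ℝ)) (nhds 0) := by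
        have := Real.continuousAt_rpow_const 0 α (Or.inr hα.le)
        simpa [ContinuousAt, Real.zero_rpow hα.ne'] using this
      have := (h2.comp h1).const_mul C₀
      simpa using this
    refine squeeze_zero (fun y => dist_nonneg) (fun y => ?_) hb
    rw [Real.dist_eq]
    exact hf x y x a
  have hφc : Continuous φ := hφsm.continuous
  have hφcs : HasCompactSupport φ := by
    apply IsCompact.of_isClosed_subset isCompact_Icc isClosed_closure
    exact closure_minimal hφsupp isClosed_Icc
  have hφintble : Integrable φ := hφc.integrable_of_hasCompactSupport hφcs
  -- integrability of the rescaled integrand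
  have hFint : ∀ x c : ℝ, Integrable (fun t => f x (γ - c * t) * φ t) := by
    intro x c
    apply Continuous.integrable_of_hasCompactSupport
    · exact ((hfc x).comp (by fun_prop)).mul hφc
    · exact HasCompactSupport.mul_left hφcs
  -- change of variables
  have key : ∀ x : ℝ, mean φ ε γ f x = ∫ t : ℝ, f x (γ - ε * |x| * t) * φ t := by
    intro x
    by_cases hx : x = 0
    · subst hx
      have hm : mean φ ε γ f 0 = f 0 γ := by simp [mean]
      rw [hm]
      simp only [abs_zero, mul_zero, zero_mul, sub_zero]
      rw [MeasureTheory.integral_const_mul, hφint, mul_one]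
    · have hax : 0 < |x| := abs_pos.mpr hx
      have hc : 0 < ε * |x| := mul_pos hε hax
      have hcne : ε * |x| ≠ 0 := hc.ne'
      rw [mean, if_neg hx]
      have h1 : (∫ y : ℝ, f x y * ((ε * |x|)⁻¹ * φ ((γ - y) / (ε * |x|))))
          = ∫ u : ℝ, f x (γ - u) * ((ε * |x|)⁻¹ * φ (u / (ε * |x|))) := by
        rw [← integral_sub_left_eq_self
          (fun u => f x (γ - u) * ((ε * |x|)⁻¹ * φ (u / (ε * |x|)))) volume γ]
        simp only [sub_sub_cancel]
      rw [h1]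
      have h2 : (∫ u : ℝ, (fun t => f x (γ - ε * |x| * t) * φ t) (u / (ε * |x|)))
          = abs (ε * |x|) • ∫ t : ℝ, f x (γ - ε * |x| * t) * φ t :=
        Measure.integral_comp_div (fun t => f x (γ - ε * |x| * t) * φ t) (ε * |x|)
      have h3 : ∀ u : ℝ, f x (γ - u) * ((ε * |x|)⁻¹ * φ (u / (ε * |x|)))
          = (ε * |x|)⁻¹ * ((fun t => f x (γ - ε * |x| * t) * φ t) (u / (ε * |x|))) := by
        intro u
        simp only
        rw [mul_div_cancel₀ _ hcne]
        ring
      simp_rw [h3]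
      rw [MeasureTheory.integral_const_mul, h2, smul_eq_mul, abs_of_pos hc, ← mul_assoc,
        inv_mul_cancel₀ hcne, one_mul]
  -- main estimate
  intro x x'
  rw [key x, key x']
  have hBnn : 0 ≤ Real.sqrt 2 * C₀ * |x - x'| ^ α := by positivity
  rw [← MeasureTheory.integral_sub (hFint x (ε * |x|)) (hFint x' (ε * |x'|))]
  have hsqrt2 : (1:ℝ) ≤ Real.sqrt 2 := by
    rw [show (1:ℝ) = Real.sqrt 1 by simp]
    exact Real.sqrt_le_sqrt (by norm_num)
  have hbound : ∀ t : ℝ,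
      |f x (γ - ε * |x| * t) * φ t - f x' (γ - ε * |x'| * t) * φ t|
        ≤ (Real.sqrt 2 * C₀ * |x - x'| ^ α) * φ t := by
    intro t
    by_cases ht : φ t = 0
    · simp [ht]
    · have htmem : t ∈ Icc (-1:ℝ) 1 := hφsupp ht
      have ht1 : |t| ≤ 1 := abs_le.mpr ⟨htmem.1, htmem.2⟩
      have hd : Real.sqrt ((x - x')^2 + ((γ - ε * |x| * t) - (γ - ε * |x'| * t))^2)
          ≤ Real.sqrt 2 * |x - x'| := by
        have e1 : ((γ - ε * |x| * t) - (γ - ε * |x'| * t)) = ε * t * (|x'| - |x|) := by ring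
        rw [e1]
        have ha : |ε * t * (|x'| - |x|)| ≤ |x - x'| := by
          rw [abs_mul, abs_mul]
          have h3 : abs (|x'| - |x|) ≤ |x' - x| := abs_abs_sub_abs_le_abs_sub x' x
          have hε' : |ε| ≤ 1 := by rw [abs_of_pos hε]; exact hε1.le
          calc |ε| * |t| * abs (|x'| - |x|) ≤ 1 * 1 * |x' - x| := by
                apply mul_le_mul _ h3 (abs_nonneg _) (by norm_num)
                exact mul_le_mul hε' ht1 (abs_nonneg _) (by norm_num)
            _ = |x - x'| := by rw [abs_sub_comm]; ring
        have h2 : (ε * t * (|x'| - |x|))^2 ≤ (x - x')^2 := by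
          calc (ε * t * (|x'| - |x|))^2 = |ε * t * (|x'| - |x|)|^2 := (sq_abs _).symm
            _ ≤ |x - x'|^2 := by
                apply pow_le_pow_left₀ (abs_nonneg _) ha
            _ = (x - x')^2 := sq_abs _
        calc Real.sqrt ((x - x')^2 + (ε * t * (|x'| - |x|))^2)
            ≤ Real.sqrt (2 * (x - x')^2) := Real.sqrt_le_sqrt (by linarith)
          _ = Real.sqrt 2 * |x - x'| := by
              rw [Real.sqrt_mul (by norm_num), Real.sqrt_sq_eq_abs]
      have hle : |f x (γ - ε * |x| * t) - f x' (γ - ε * |x'| * t)|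
          ≤ Real.sqrt 2 * C₀ * |x - x'| ^ α := by
        calc |f x (γ - ε * |x| * t) - f x' (γ - ε * |x'| * t)|
            ≤ C₀ * (Real.sqrt ((x - x')^2 + ((γ - ε * |x| * t) - (γ - ε * |x'| * t))^2))^α :=
              hf _ _ _ _
          _ ≤ C₀ * (Real.sqrt 2 * |x - x'|)^α := by
              apply mul_le_mul_of_nonneg_left _ hC₀.le
              exact Real.rpow_le_rpow (Real.sqrt_nonneg _) hd hα.le
          _ = C₀ * ((Real.sqrt 2)^α * |x - x'|^α) := by
              rw [Real.mul_rpow (Real.sqrt_nonneg _) (abs_nonneg _)]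
          _ ≤ C₀ * (Real.sqrt 2 * |x - x'|^α) := by
              apply mul_le_mul_of_nonneg_left _ hC₀.le
              apply mul_le_mul_of_nonneg_right _ (Real.rpow_nonneg (abs_nonneg _) _)
              calc (Real.sqrt 2)^α ≤ (Real.sqrt 2)^(1:ℝ) :=
                    Real.rpow_le_rpow_of_exponent_le hsqrt2 hα1
                _ = Real.sqrt 2 := Real.rpow_one _
          _ = Real.sqrt 2 * C₀ * |x - x'|^α := by ring
      have e2 : f x (γ - ε * |x| * t) * φ t - f x' (γ - ε * |x'| * t) * φ t
          = (f x (γ - ε * |x| * t) - f x' (γ - ε * |x'| * t)) * φ t := by ring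
      rw [e2, abs_mul, abs_of_nonneg (hφpos t)]
      exact mul_le_mul_of_nonneg_right hle (hφpos t)
  calc |∫ t : ℝ, (f x (γ - ε * |x| * t) * φ t - f x' (γ - ε * |x'| * t) * φ t)|
      ≤ ∫ t : ℝ, (Real.sqrt 2 * C₀ * |x - x'| ^ α) * φ t := by
        rw [← Real.norm_eq_abs]
        exact MeasureTheory.norm_integral_le_of_norm_le
          (hφintble.const_mul (Real.sqrt 2 * C₀ * |x - x'| ^ α))
          (Filter.Eventually.of_forall (fun t => by
            rw [Real.norm_eq_abs]; exact hbound t))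
    _ = Real.sqrt 2 * C₀ * |x - x'| ^ α := by
        rw [MeasureTheory.integral_const_mul, hφint, mul_one]
end

section
/- Let f∈C^∞(ℝ²) with supp f ⊂ {(x,y): y ≥ x²}. Then for every integer k≥1 and every (ξ,η)∈ℝ², R[x^k f](ξ,η) = ∫_{−∞}^{η} ((η−η')^{k−1}/(k−1)!) · ∂_ξ^k R[f](ξ,η') dη', i.e. the k-fold convolution in η of the Heaviside function with ∂_ξ^k R[f] equals the Radon transform of x^k f(x,y). -/
/-!
Differentiating under the integral sign gives
`∂_ξ^k R[f](ξ, η') = ∫ x^k (∂_y^k f)(x, ξx + η') dx`; the support condition keeps `x` in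
a bounded set, locally uniformly in `ξ`, which supplies the domination. For fixed `x`, the
function `g(η') = f(x, ξx + η')` vanishes for `η' < x² - ξx`, so Taylor's formula with
integral remainder based at such a point collapses to
`∫_{-∞}^η (η - η')^{k-1}/(k-1)! g^{(k)}(η') dη' = g(η)`. Fubini's theorem applies because,
for `η' ≤ η`, the integrand is continuous and supported in the compact box
`[-ξ²/4, η] × [-|ξ| - √η, |ξ| + √η]`.
-/

open MeasureTheory Set

/-- The Radon transform `R[f](ξ,η) = ∫ f(x, ξx+η) dx`. -/
noncomputable def radon (f : ℝ → ℝ → ℝ) (ξ η : ℝ) : ℝ :=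
  ∫ x : ℝ, f x (ξ * x + η)

open Filter Topology
open scoped ContDiff

theorem hasDerivAt_sub_pow_div_factorial (b y : ℝ) (j : ℕ) :
    HasDerivAt (fun y => (b - y) ^ (j + 1) / (j + 1).factorial)
      (-((b - y) ^ j / j.factorial)) y := by
  have h : HasDerivAt (fun y => (b - y) ^ (j + 1) / (j + 1).factorial)
      ((j + 1) * (b - y) ^ j * -1 / (j + 1).factorial) y := by
    simpa using (((hasDerivAt_id y).const_sub b).pow (j + 1)).div_const ((j + 1).factorial : ℝ)
  convert h using 1
  push_cast [Nat.factorial_succ]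
  field_simp

/- `G j` stands for the `j`-th derivative of `G 0`: this is Taylor's formula with integral
remainder at a point `a` where all derivatives vanish. -/
theorem intervalIntegral_pow_div_factorial_mul_eq {G : ℕ → ℝ → ℝ}
    (hG : ∀ j y, HasDerivAt (G j) (G (j + 1) y) y) {a : ℝ} (ha : ∀ j, G j a = 0) (b : ℝ) :
    ∀ j : ℕ, ∫ y in a..b, (b - y) ^ j / j.factorial * G (j + 1) y = G 0 b
  | 0 => by
    have hGc : Continuous (G 1) := continuous_iff_continuousAt.2 fun y => (hG 1 y).continuousAt
    simp [intervalIntegral.integral_eq_sub_of_hasDerivAt (fun y _ => hG 0 y)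
      (hGc.intervalIntegrable a b), ha 0]
  | j + 1 => by
    have hGc : Continuous (G (j + 2)) :=
      continuous_iff_continuousAt.2 fun y => (hG (j + 2) y).continuousAt
    have hparts := intervalIntegral.integral_mul_deriv_eq_deriv_mul
      (fun y _ => hasDerivAt_sub_pow_div_factorial b y j) (fun y _ => hG (j + 1) y)
      ((by fun_prop : Continuous fun y => -((b - y) ^ j / j.factorial)).intervalIntegrable a b)
      (hGc.intervalIntegrable a b)
    simp only [sub_self, ha, zero_pow j.succ_ne_zero, zero_div, zero_mul, mul_zero, zero_sub,
      neg_mul, intervalIntegral.integral_neg, neg_neg] at hparts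
    rw [hparts, intervalIntegral_pow_div_factorial_mul_eq hG ha b j]

theorem setIntegral_Iic_pow_div_factorial_mul_eq {G : ℕ → ℝ → ℝ}
    (hG : ∀ j y, HasDerivAt (G j) (G (j + 1) y) y) {a : ℝ} (ha : ∀ j, ∀ y ≤ a, G j y = 0)
    (b : ℝ) (k : ℕ) :
    ∫ y in Iic b, (b - y) ^ k / k.factorial * G (k + 1) y = G 0 b := by
  have ha' : ∀ j, ∀ y ≤ min a b, G j y = 0 :=
    fun j y hy => ha j y (hy.trans (min_le_left a b))
  rw [setIntegral_eq_of_subset_of_forall_sdiff_eq_zero measurableSet_Iic Ioc_subset_Iic_self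
      fun y hy => by rw [ha' (k + 1) y (not_lt.1 fun h => hy.2 ⟨h, hy.1⟩), mul_zero],
    ← intervalIntegral.integral_of_le (min_le_right a b)]
  exact intervalIntegral_pow_div_factorial_mul_eq hG (fun j => ha' j _ le_rfl) b k

theorem abs_le_abs_add_sqrt_of_sq_le {x s c : ℝ} (h : x ^ 2 ≤ s * x + c) :
    |x| ≤ |s| + √c := by
  have hc : c ≤ √c * √c := by
    rcases le_or_gt 0 c with hc | hc
    · rw [Real.mul_self_sqrt hc]
    · nlinarith [Real.sqrt_nonneg c]
  have hsx : s * x ≤ |s| * |x| := abs_mul s x ▸ le_abs_self (s * x)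
  by_contra! hx
  have hx0 : 0 < |x| := (add_nonneg (abs_nonneg s) (Real.sqrt_nonneg c)).trans_lt hx
  have h1 : (|s| + √c) * |x| < |x| * |x| := mul_lt_mul_of_pos_right hx hx0
  have h2 : √c * √c ≤ √c * |x| :=
    mul_le_mul_of_nonneg_left (by linarith [abs_nonneg s]) (Real.sqrt_nonneg c)
  nlinarith [sq_abs x]

theorem IsCompact.exists_norm_le_indicator_Icc {Φ : ℝ × ℝ → ℝ} (hΦ : Continuous Φ)
    {K : Set ℝ} (hK : IsCompact K) {R : ℝ}
    (hR : ∀ s ∈ K, ∀ x, Φ (s, x) ≠ 0 → |x| ≤ R) :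
    ∃ M, ∀ s ∈ K, ∀ x, ‖Φ (s, x)‖ ≤ (Icc (-R) R).indicator (fun _ => M) x := by
  obtain ⟨M, hM⟩ := (hK.prod isCompact_Icc).exists_bound_of_continuousOn hΦ.continuousOn
  refine ⟨M, fun s hs x => ?_⟩
  by_cases hxR : x ∈ Icc (-R) R
  · rw [indicator_of_mem hxR]
    exact hM _ (mk_mem_prod hs hxR)
  · rw [indicator_of_notMem hxR, norm_le_zero_iff]
    by_contra hx
    exact hxR (abs_le.1 (hR s hs x hx))

noncomputable def iteratedPartialSnd (F : ℝ × ℝ → ℝ) : ℕ → ℝ × ℝ → ℝ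
  | 0 => F
  | j + 1 => fun p => fderiv ℝ (iteratedPartialSnd F j) p (0, 1)

section IteratedPartialSnd

variable {F : ℝ × ℝ → ℝ}

theorem ContDiff.iteratedPartialSnd (hF : ContDiff ℝ ∞ F) :
    ∀ j, ContDiff ℝ ∞ (iteratedPartialSnd F j)
  | 0 => hF
  | j + 1 => ((hF.iteratedPartialSnd j).fderiv_right le_rfl).clm_apply contDiff_const

theorem iteratedPartialSnd_eqOn_zero {U : Set (ℝ × ℝ)} (hU : IsOpen U) (hF : EqOn F 0 U) :
    ∀ j, EqOn (iteratedPartialSnd F j) 0 U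
  | 0 => hF
  | j + 1 => fun p hp => by
    have hloc : iteratedPartialSnd F j =ᶠ[𝓝 p] fun _ => 0 :=
      eventually_of_mem (hU.mem_nhds hp) (iteratedPartialSnd_eqOn_zero hU hF j)
    simp [iteratedPartialSnd, hloc.fderiv_eq]

theorem HasDerivAt.iteratedPartialSnd_comp (hF : ContDiff ℝ ∞ F) (j : ℕ) (x : ℝ)
    {g : ℝ → ℝ} {g' t : ℝ} (hg : HasDerivAt g g' t) :
    HasDerivAt (fun t => iteratedPartialSnd F j (x, g t))
      (iteratedPartialSnd F (j + 1) (x, g t) * g') t := by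
  have hD : HasFDerivAt (iteratedPartialSnd F j)
      (fderiv ℝ (iteratedPartialSnd F j) (x, g t)) (x, g t) :=
    ((hF.iteratedPartialSnd j).differentiable (by simp) _).hasFDerivAt
  refine (hD.comp_hasDerivAt t ((hasDerivAt_const t x).prodMk hg)).congr_deriv ?_
  rw [show ((0 : ℝ), g') = g' • ((0 : ℝ), (1 : ℝ)) by simp, map_smul, smul_eq_mul, mul_comm]
  rfl

theorem sq_le_of_iteratedPartialSnd_ne_zero (hsupp : ∀ x y : ℝ, y < x ^ 2 → F (x, y) = 0)
    (j : ℕ) {x y : ℝ} (h : iteratedPartialSnd F j (x, y) ≠ 0) : x ^ 2 ≤ y :=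
  not_lt.1 fun hlt => h <| iteratedPartialSnd_eqOn_zero
    (isOpen_lt continuous_snd (continuous_fst.pow 2)) (fun p hp => hsupp p.1 p.2 hp) j hlt

theorem setIntegral_Iic_pow_div_factorial_mul_iteratedPartialSnd (hF : ContDiff ℝ ∞ F)
    (hsupp : ∀ x y : ℝ, y < x ^ 2 → F (x, y) = 0) (k : ℕ) (x ξ η : ℝ) :
    ∫ η' in Iic η, (η - η') ^ k / k.factorial *
      iteratedPartialSnd F (k + 1) (x, ξ * x + η') = F (x, ξ * x + η) :=
  setIntegral_Iic_pow_div_factorial_mul_eq (G := fun j t => iteratedPartialSnd F j (x, ξ * x + t))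
    (fun j t => (HasDerivAt.iteratedPartialSnd_comp hF j x
      ((hasDerivAt_id t).const_add _)).congr_deriv (mul_one _))
    (a := x ^ 2 - ξ * x - 1)
    (fun j t ht => not_not.1 fun hne => by
      linarith [sq_le_of_iteratedPartialSnd_ne_zero hsupp j hne]) η k

theorem hasDerivAt_integral_pow_mul_iteratedPartialSnd (hF : ContDiff ℝ ∞ F)
    (hsupp : ∀ x y : ℝ, y < x ^ 2 → F (x, y) = 0) (j : ℕ) (ξ c : ℝ) :
    HasDerivAt (fun s => ∫ x, x ^ j * iteratedPartialSnd F j (x, s * x + c))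
      (∫ x, x ^ (j + 1) * iteratedPartialSnd F (j + 1) (x, ξ * x + c)) ξ := by
  have hcont : ∀ i, Continuous fun p : ℝ × ℝ =>
      p.2 ^ i * iteratedPartialSnd F i (p.2, p.1 * p.2 + c) :=
    fun i => (continuous_snd.pow i).mul ((hF.iteratedPartialSnd i).continuous.comp (by fun_prop))
  have hsupport : ∀ i, ∀ s ∈ Metric.closedBall ξ 1, ∀ x,
      x ^ i * iteratedPartialSnd F i (x, s * x + c) ≠ 0 → |x| ≤ |ξ| + 1 + √c := by
    intro i s hs x hx
    have hx := abs_le_abs_add_sqrt_of_sq_le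
      (sq_le_of_iteratedPartialSnd_ne_zero hsupp i (right_ne_zero_of_mul hx))
    have hs' := abs_sub_abs_le_abs_sub s ξ
    rw [Metric.mem_closedBall, Real.dist_eq] at hs
    linarith
  have hbound_int : ∀ M : ℝ,
      Integrable ((Icc (-(|ξ| + 1 + √c)) (|ξ| + 1 + √c)).indicator fun _ => M) :=
    fun M => (integrableOn_const measure_Icc_lt_top.ne).integrable_indicator measurableSet_Icc
  obtain ⟨M, hM⟩ :=
    (isCompact_closedBall ξ 1).exists_norm_le_indicator_Icc (hcont j) (hsupport j)
  obtain ⟨M', hM'⟩ :=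
    (isCompact_closedBall ξ 1).exists_norm_le_indicator_Icc (hcont (j + 1)) (hsupport (j + 1))
  refine (hasDerivAt_integral_of_dominated_loc_of_deriv_le (Metric.ball_mem_nhds ξ one_pos)
    (Eventually.of_forall fun s => ((hcont j).comp (by fun_prop)).aestronglyMeasurable)
    ((hbound_int M).mono' ((hcont j).comp (by fun_prop)).aestronglyMeasurable
      (ae_of_all _ (hM ξ (Metric.mem_closedBall_self zero_le_one))))
    ((hcont (j + 1)).comp (by fun_prop)).aestronglyMeasurable
    (ae_of_all _ fun x s hs => hM' s (Metric.ball_subset_closedBall hs) x) (hbound_int M')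
    (ae_of_all _ fun x s _ => ?_)).2
  refine ((HasDerivAt.iteratedPartialSnd_comp hF j x
    ((hasDerivAt_mul_const x).add_const c)).const_mul (x ^ j)).congr_deriv ?_
  ring

theorem iteratedDeriv_integral_eq_integral_pow_mul_iteratedPartialSnd (hF : ContDiff ℝ ∞ F)
    (hsupp : ∀ x y : ℝ, y < x ^ 2 → F (x, y) = 0) (c : ℝ) :
    ∀ k ξ, iteratedDeriv k (fun s => ∫ x, F (x, s * x + c)) ξ =
      ∫ x, x ^ k * iteratedPartialSnd F k (x, ξ * x + c)
  | 0, ξ => by simp [iteratedPartialSnd]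
  | k + 1, ξ => by
    rw [iteratedDeriv_succ, funext (iteratedDeriv_integral_eq_integral_pow_mul_iteratedPartialSnd
      hF hsupp c k)]
    exact (hasDerivAt_integral_pow_mul_iteratedPartialSnd hF hsupp k ξ c).deriv

theorem integrable_mul_pow_mul_iteratedPartialSnd (hF : ContDiff ℝ ∞ F)
    (hsupp : ∀ x y : ℝ, y < x ^ 2 → F (x, y) = 0) {w : ℝ → ℝ} (hw : Continuous w)
    (j : ℕ) (ξ η : ℝ) :
    Integrable
      (Function.uncurry fun η' x => w η' * (x ^ j * iteratedPartialSnd F j (x, ξ * x + η')))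
      ((volume.restrict (Iic η)).prod volume) := by
  rw [← Measure.restrict_univ (μ := (volume : Measure ℝ)), Measure.prod_restrict,
    Measure.restrict_univ]
  have hcont : Continuous (Function.uncurry fun η' x =>
      w η' * (x ^ j * iteratedPartialSnd F j (x, ξ * x + η'))) :=
    (hw.comp continuous_fst).mul ((continuous_snd.pow j).mul
      ((hF.iteratedPartialSnd j).continuous.comp (by fun_prop)))
  refine (hcont.continuousOn.integrableOn_compact
    ((isCompact_Icc (a := -(ξ ^ 2) / 4) (b := η)).prod
      (isCompact_Icc (a := -(|ξ| + √η)) (b := |ξ| + √η)))).of_forall_sdiff_eq_zero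
    (measurableSet_Iic.prod MeasurableSet.univ) ?_
  rintro ⟨η', x⟩ ⟨⟨hη' : η' ≤ η, -⟩, hK⟩
  by_contra hne
  have hsq : x ^ 2 ≤ ξ * x + η' := sq_le_of_iteratedPartialSnd_ne_zero hsupp j
    (right_ne_zero_of_mul (right_ne_zero_of_mul hne))
  have hx := abs_le_abs_add_sqrt_of_sq_le (hsq.trans (by linarith : ξ * x + η' ≤ ξ * x + η))
  exact hK ⟨⟨by nlinarith [sq_nonneg (x - ξ / 2)], hη'⟩, abs_le.1 hx⟩

end IteratedPartialSnd

theorem stmt2 (f : ℝ → ℝ → ℝ)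
    (hf : ContDiff ℝ (⊤ : ℕ∞) (fun p : ℝ × ℝ => f p.1 p.2))
    (hsupp : ∀ x y : ℝ, y < x^2 → f x y = 0)
    (k : ℕ) (hk : 1 ≤ k) (ξ η : ℝ) :
    (∫ x : ℝ, x^k * f x (ξ * x + η)) =
      ∫ η' in Iic η,
        ((η - η')^(k-1) / (Nat.factorial (k-1) : ℝ)) *
          iteratedDeriv k (fun s => radon f s η') ξ := by
  obtain ⟨k, rfl⟩ : ∃ m, k = m + 1 := ⟨k - 1, by omega⟩
  set F : ℝ × ℝ → ℝ := fun p => f p.1 p.2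
  have hradon : ∀ η', iteratedDeriv (k + 1) (fun s => radon f s η') ξ =
      ∫ x, x ^ (k + 1) * iteratedPartialSnd F (k + 1) (x, ξ * x + η') := fun η' =>
    iteratedDeriv_integral_eq_integral_pow_mul_iteratedPartialSnd hf hsupp η' (k + 1) ξ
  have htaylor : ∀ x, ∫ η' in Iic η, (η - η') ^ k / k.factorial *
      iteratedPartialSnd F (k + 1) (x, ξ * x + η') = f x (ξ * x + η) := fun x =>
    setIntegral_Iic_pow_div_factorial_mul_iteratedPartialSnd hf hsupp k x ξ η
  simp only [Nat.add_sub_cancel, hradon]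
  calc ∫ x, x ^ (k + 1) * f x (ξ * x + η)
      = ∫ x, ∫ η' in Iic η, (η - η') ^ k / k.factorial *
          (x ^ (k + 1) * iteratedPartialSnd F (k + 1) (x, ξ * x + η')) := by
        congr 1 with x
        rw [← htaylor x, ← integral_const_mul]
        congr 1 with η'
        ring
    _ = ∫ η' in Iic η, ∫ x, (η - η') ^ k / k.factorial *
          (x ^ (k + 1) * iteratedPartialSnd F (k + 1) (x, ξ * x + η')) :=
        (integral_integral_swap (integrable_mul_pow_mul_iteratedPartialSnd hf hsupp
          (by fun_prop) (k + 1) ξ η)).symm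
    _ = _ := by simp_rw [integral_const_mul]
end

section
/- Let f:ℝ²→ℝ be continuous with supp f ⊂ {(x,y): y ≥ x²}, let φ be an even nonnegative C_c^∞ function supported in [−1,1] with ∫φ=1, let ε>0, γ∈ℝ and k≥0 be an integer. Then ∫_{|ξ|≤ε} R[x^k f](ξ,γ) φ_ε(ξ) dξ = ∫_ℝ x^k M_{φ,ε,γ}[f](x) dx. -/
open MeasureTheory Set

open Function

theorem Function.Even.eq_of_abs_eq {φ : ℝ → ℝ} (hφ : Function.Even φ) {s t : ℝ} (h : |s| = |t|) :
    φ s = φ t := by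
  rcases abs_eq_abs.1 h with rfl | rfl
  · rfl
  · exact hφ t

theorem mean_eq_integral_comp_line {φ : ℝ → ℝ} (hφ : Function.Even φ) (ε γ : ℝ)
    (f : ℝ → ℝ → ℝ) {x : ℝ} (hx : x ≠ 0) :
    mean φ ε γ f x = ∫ ξ, f x (ξ * x + γ) * (ε⁻¹ * φ (ξ / ε)) := by
  have hx' : |x| ≠ 0 := abs_ne_zero.2 hx
  set F : ℝ → ℝ := fun y => f x y * ((ε * |x|)⁻¹ * φ ((γ - y) / (ε * |x|)))
  have hF : ∀ ξ, f x (ξ * x + γ) * (ε⁻¹ * φ (ξ / ε)) = |x| * F (ξ * x + γ) := by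
    intro ξ
    have harg : |(γ - (ξ * x + γ)) / (ε * |x|)| = |ξ / ε| := by
      rw [sub_add_cancel_right, abs_div, abs_div, abs_neg, abs_mul, abs_mul, abs_abs,
        mul_div_mul_right _ _ hx']
    simp only [F]
    rw [hφ.eq_of_abs_eq harg, mul_inv]
    linear_combination -(f x (ξ * x + γ) * ε⁻¹ * φ (ξ / ε)) * mul_inv_cancel₀ hx'
  calc mean φ ε γ f x = ∫ y, F y := if_neg hx
    _ = |x| * ∫ ξ, F (ξ * x + γ) := by
      rw [Measure.integral_comp_mul_right (fun ξ => F (ξ + γ)), integral_add_right_eq_self,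
        smul_eq_mul, abs_inv, mul_inv_cancel_left₀ hx']
    _ = _ := by rw [← integral_const_mul]; simp_rw [hF]

theorem abs_le_of_sq_le_mul_add {x ξ γ : ℝ} (h : x ^ 2 ≤ ξ * x + γ) : |x| ≤ |ξ| + |γ| + 1 := by
  have h' : |x| ^ 2 ≤ |ξ| * |x| + |γ| := by
    rw [sq_abs, ← abs_mul]
    linarith [le_abs_self (ξ * x), le_abs_self γ]
  nlinarith [abs_nonneg x, abs_nonneg ξ, abs_nonneg γ]

theorem support_comp_div_subset {φ : ℝ → ℝ} (hφ : support φ ⊆ Icc (-1) 1) {ε : ℝ} (hε : 0 < ε) :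
    support (fun ξ => φ (ξ / ε)) ⊆ Icc (-ε) ε := by
  intro ξ hξ
  obtain ⟨h₁, h₂⟩ := hφ hξ
  rw [le_div_iff₀ hε] at h₁
  rw [div_le_iff₀ hε] at h₂
  constructor <;> linarith

section RadonIntegrand

variable {f : ℝ → ℝ → ℝ} {φ : ℝ → ℝ} {ε : ℝ}

theorem hasCompactSupport_radon_integrand (hsupp : ∀ x y : ℝ, y < x ^ 2 → f x y = 0)
    (hφ : support φ ⊆ Icc (-1) 1) (hε : 0 < ε) (γ : ℝ) (k : ℕ) :
    HasCompactSupport fun p : ℝ × ℝ => p.2 ^ k * f p.2 (p.1 * p.2 + γ) * (ε⁻¹ * φ (p.1 / ε)) := by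
  refine HasCompactSupport.intro (K := Icc (-ε) ε ×ˢ Icc (-(ε + |γ| + 1)) (ε + |γ| + 1))
    (isCompact_Icc.prod isCompact_Icc) fun ⟨ξ, x⟩ hp => ?_
  by_contra hne
  have hf : f x (ξ * x + γ) ≠ 0 := right_ne_zero_of_mul (left_ne_zero_of_mul hne)
  have hξ : ξ ∈ Icc (-ε) ε :=
    support_comp_div_subset hφ hε (right_ne_zero_of_mul (right_ne_zero_of_mul hne))
  have hx : x ^ 2 ≤ ξ * x + γ := not_lt.1 fun h => hf (hsupp _ _ h)
  have hξ' : |ξ| ≤ ε := abs_le.2 hξ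
  exact hp ⟨hξ, abs_le.1 ((abs_le_of_sq_le_mul_add hx).trans (by linarith))⟩

theorem integrable_radon_integrand (hf : Continuous fun p : ℝ × ℝ => f p.1 p.2)
    (hsupp : ∀ x y : ℝ, y < x ^ 2 → f x y = 0) (hφc : Continuous φ)
    (hφ : support φ ⊆ Icc (-1) 1) (hε : 0 < ε) (γ : ℝ) (k : ℕ) :
    Integrable (uncurry fun ξ x => x ^ k * f x (ξ * x + γ) * (ε⁻¹ * φ (ξ / ε)))
      (volume.prod volume) := by
  rw [← Measure.volume_eq_prod]
  refine Continuous.integrable_of_hasCompactSupport ?_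
    (hasCompactSupport_radon_integrand hsupp hφ hε γ k)
  have hline : Continuous fun p : ℝ × ℝ => f p.2 (p.1 * p.2 + γ) :=
    hf.comp (continuous_snd.prodMk ((continuous_fst.mul continuous_snd).add continuous_const))
  exact ((continuous_snd.pow k).mul hline).mul
    (continuous_const.mul (hφc.comp (continuous_fst.div_const ε)))

end RadonIntegrand

theorem stmt3_general (f : ℝ → ℝ → ℝ)
    (hf : Continuous (fun p : ℝ × ℝ => f p.1 p.2))
    (hsupp : ∀ x y : ℝ, y < x^2 → f x y = 0)
    (φ : ℝ → ℝ) (hφsm : ContDiff ℝ (⊤ : ℕ∞) φ)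
    (hφsupp : Function.support φ ⊆ Icc (-1 : ℝ) 1)
    (hφeven : ∀ t, φ (-t) = φ t)
    (ε : ℝ) (hε : 0 < ε) (γ : ℝ) (k : ℕ) :
    (∫ ξ in Icc (-ε) ε, (∫ x : ℝ, x^k * f x (ξ * x + γ)) * (ε⁻¹ * φ (ξ / ε))) =
      ∫ x : ℝ, x^k * mean φ ε γ f x := by
  have hφ_zero : ∀ ξ ∉ Icc (-ε) ε, φ (ξ / ε) = 0 := fun ξ hξ =>
    notMem_support.1 fun h => hξ (support_comp_div_subset hφsupp hε h)
  calc (∫ ξ in Icc (-ε) ε, (∫ x : ℝ, x^k * f x (ξ * x + γ)) * (ε⁻¹ * φ (ξ / ε)))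
      = ∫ ξ, ∫ x, x ^ k * f x (ξ * x + γ) * (ε⁻¹ * φ (ξ / ε)) := by
        rw [setIntegral_eq_integral_of_forall_compl_eq_zero fun ξ hξ => by simp [hφ_zero ξ hξ]]
        simp_rw [integral_mul_const]
    _ = ∫ x, ∫ ξ, x ^ k * f x (ξ * x + γ) * (ε⁻¹ * φ (ξ / ε)) :=
        integral_integral_swap
          (integrable_radon_integrand hf hsupp hφsm.continuous hφsupp hε γ k)
    _ = ∫ x : ℝ, x^k * mean φ ε γ f x :=
        integral_congr_ae <| (Measure.ae_ne volume 0).mono fun x hx => by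
          simp only [mean_eq_integral_comp_line hφeven ε γ f hx, ← integral_const_mul, mul_assoc]

theorem stmt3 (f : ℝ → ℝ → ℝ)
    (hf : Continuous (fun p : ℝ × ℝ => f p.1 p.2))
    (hsupp : ∀ x y : ℝ, y < x^2 → f x y = 0)
    (φ : ℝ → ℝ) (hφsm : ContDiff ℝ (⊤ : ℕ∞) φ)
    (hφsupp : Function.support φ ⊆ Icc (-1 : ℝ) 1)
    (hφpos : ∀ t, 0 ≤ φ t) (hφeven : ∀ t, φ (-t) = φ t)
    (hφint : (∫ t : ℝ, φ t) = 1)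
    (ε : ℝ) (hε : 0 < ε) (γ : ℝ) (k : ℕ) :
    (∫ ξ in Icc (-ε) ε, (∫ x : ℝ, x^k * f x (ξ * x + γ)) * (ε⁻¹ * φ (ξ / ε))) =
      ∫ x : ℝ, x^k * mean φ ε γ f x :=
  stmt3_general f hf hsupp φ hφsm hφsupp hφeven ε hε γ k
end

section
/- Let (φ_N) be a Hörmander sequence with constant C₁. Then there exists C>0 depending only on C₁ such that for every continuous f:ℝ²→ℝ with supp f ⊂ {(x,y): y ≥ x²}, every 0<ε<1 and ε²/4 ≤ γ < 1, every integer N≥1 and every 0 ≤ k ≤ N, |m_k(M_{φ_N,ε,γ}[f])| ≤ (C/ε)^{k+1} · e^N · ‖R[f]‖_{ε,γ}. -/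
open MeasureTheory Set

/-- The data norm `‖g‖_{ε,γ} = sup_{|η|≤γ} ∫_{|ξ|≤ε} |g(ξ,η)| dξ`. -/
noncomputable def dataNorm (g : ℝ → ℝ → ℝ) (ε γ : ℝ) : ℝ :=
  ⨆ η : Icc (-γ) γ, ∫ ξ in Icc (-ε) ε, |g ξ (η : ℝ)|

/-!
Substituting `y = ξ x + γ` writes the mean as an average of `f` along the lines of slope `ξ`
through `(0, γ)`, with weight `φ(ξ / ε) / ε`. For each `x`, `k` integrations by parts in `ξ` trade
the factor `x ^ k` for `k` derivatives of the weight, each costing `C₁ N / ε`, against the `k`-th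
primitive of `f(x, ·)`; integrating in `x` gives the `k`-th primitive in `η` of the Radon transform
`R[f](ξ, η)`. As `f` vanishes below the parabola and `ξ² ≤ ε² ≤ 4γ`, these primitives start at
`η = -γ`, so the `k`-th one at `η = γ` has `L¹(dξ)`-norm at most `(2γ)^k / k!` times the data norm.
Finally `N^k / k! ≤ e^N`.
-/

open Function intervalIntegral

noncomputable def iteratedPrimitive (g : ℝ → ℝ) : ℕ → ℝ → ℝ
  | 0 => g
  | j + 1 => fun t => ∫ u in (0 : ℝ)..t, iteratedPrimitive g j u

section IteratedPrimitive

variable {g : ℝ → ℝ}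

theorem continuous_iteratedPrimitive (hg : Continuous g) : ∀ j, Continuous (iteratedPrimitive g j)
  | 0 => hg
  | j + 1 =>
    continuous_primitive (fun a b ↦ (continuous_iteratedPrimitive hg j).intervalIntegrable a b) 0

theorem continuous_iteratedPrimitive_uncurry {X : Type*} [TopologicalSpace X] {F : X → ℝ → ℝ}
    (hF : Continuous (uncurry F)) :
    ∀ j, Continuous fun p : X × ℝ ↦ iteratedPrimitive (F p.1) j p.2
  | 0 => hF
  | j + 1 => continuous_parametric_intervalIntegral_of_continuous
      (f := fun p : X × ℝ ↦ iteratedPrimitive (F p.1) j)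
      ((continuous_iteratedPrimitive_uncurry hF j).comp (continuous_fst.fst.prodMk continuous_snd))
      continuous_snd

theorem hasDerivAt_iteratedPrimitive_succ (hg : Continuous g) (j : ℕ) (t : ℝ) :
    HasDerivAt (iteratedPrimitive g (j + 1)) (iteratedPrimitive g j t) t :=
  ((continuous_iteratedPrimitive hg j).integral_hasStrictDerivAt 0 t).hasDerivAt

theorem iteratedPrimitive_eq_zero_of_le {c : ℝ} (hc : 0 ≤ c) (hg : ∀ t ≤ c, g t = 0) :
    ∀ j, ∀ t ≤ c, iteratedPrimitive g j t = 0
  | 0, t, ht => hg t ht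
  | j + 1, t, ht => by
    refine (integral_congr fun u hu ↦ ?_).trans integral_zero
    exact iteratedPrimitive_eq_zero_of_le hc hg j u (hu.2.trans (max_le hc ht))

theorem pow_mul_integral_comp_mul_add {ψ : ℝ → ℝ} (hψ : ContDiff ℝ (⊤ : ℕ∞) ψ) {a b : ℝ}
    (ha : ∀ j, iteratedDeriv j ψ a = 0) (hb : ∀ j, iteratedDeriv j ψ b = 0)
    (hg : Continuous g) (x γ : ℝ) :
    ∀ j, x ^ j * ∫ ξ in a..b, ψ ξ * g (ξ * x + γ) =
      (-1) ^ j * ∫ ξ in a..b, iteratedDeriv j ψ ξ * iteratedPrimitive g j (ξ * x + γ)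
  | 0 => by simp [iteratedPrimitive]
  | j + 1 => by
    have hline : Continuous fun ξ : ℝ ↦ ξ * x + γ := by fun_prop
    have hψ' : ∀ ξ, HasDerivAt (iteratedDeriv j ψ) (iteratedDeriv (j + 1) ψ ξ) ξ := fun ξ ↦ by
      rw [iteratedDeriv_succ]
      exact (hψ.differentiable_iteratedDeriv j (by exact_mod_cast ENat.natCast_lt_top j)
        ξ).hasDerivAt
    have hP : ∀ ξ, HasDerivAt (fun ξ ↦ iteratedPrimitive g (j + 1) (ξ * x + γ))
        (iteratedPrimitive g j (ξ * x + γ) * x) ξ := fun ξ ↦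
      (hasDerivAt_iteratedPrimitive_succ hg j _).comp ξ (((hasDerivAt_id ξ).mul_const x).add_const γ
        |>.congr_deriv (one_mul x))
    have hibp := integral_mul_deriv_eq_deriv_mul (a := a) (b := b) (fun ξ _ ↦ hψ' ξ)
      (fun ξ _ ↦ hP ξ)
      ((hψ.continuous_iteratedDeriv (j + 1) (WithTop.coe_le_coe.2 le_top)).intervalIntegrable _ _)
      ((((continuous_iteratedPrimitive hg j).comp hline).mul continuous_const).intervalIntegrable
        _ _)
    simp only [ha, hb, zero_mul, sub_zero, zero_sub, ← mul_assoc,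
      intervalIntegral.integral_mul_const] at hibp
    rw [pow_succ', mul_assoc, pow_mul_integral_comp_mul_add hψ ha hb hg x γ j, mul_left_comm,
      mul_comm x, hibp]
    ring

end IteratedPrimitive

theorem intervalIntegral_integral_swap_of_continuous {F : ℝ → ℝ → ℝ}
    (hF : Continuous (uncurry F)) {a b c d : ℝ} (hab : a ≤ b) (hcd : c ≤ d) :
    ∫ x in a..b, ∫ y in c..d, F x y = ∫ y in c..d, ∫ x in a..b, F x y := by
  simp only [integral_of_le hab, integral_of_le hcd]
  refine integral_integral_swap ?_
  rw [Measure.prod_restrict, ← Measure.volume_eq_prod]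
  exact (hF.continuousOn.integrableOn_compact (isCompact_Icc.prod isCompact_Icc)).mono_set
    (prod_mono Ioc_subset_Icc_self Ioc_subset_Icc_self)

theorem iteratedDeriv_eq_zero_of_support_subset {φ : ℝ → ℝ} (hφ : ContDiff ℝ (⊤ : ℕ∞) φ)
    {a b : ℝ} (hsupp : support φ ⊆ Icc a b) (j : ℕ) {t : ℝ} (ht : t ∉ Ioo a b) :
    iteratedDeriv j φ t = 0 := by
  have hIcc : support (iteratedDeriv j φ) ⊆ Icc a b := by
    induction j with
    | zero => simpa using hsupp
    | succ j ih =>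
      rw [iteratedDeriv_succ]
      exact support_deriv_subset.trans (closure_minimal ih isClosed_Icc)
  have hclosed : IsClosed {t | iteratedDeriv j φ t = 0} :=
    isClosed_eq (hφ.continuous_iteratedDeriv j (WithTop.coe_le_coe.2 le_top)) continuous_const
  have hcompl : (Icc a b)ᶜ ⊆ {t | iteratedDeriv j φ t = 0} := fun t ht ↦
    notMem_support.1 fun h ↦ ht (hIcc h)
  rw [← interior_Icc, ← mem_compl_iff, ← closure_compl] at ht
  exact closure_minimal hcompl hclosed ht

theorem iteratedDeriv_comp_inv_mul_eq_zero {φ : ℝ → ℝ} (hφ : ContDiff ℝ (⊤ : ℕ∞) φ)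
    (hsupp : support φ ⊆ Icc (-1) 1) {ε : ℝ} (hε : 0 < ε) (j : ℕ) {t : ℝ} (ht : t ∉ Ioo (-ε) ε) :
    iteratedDeriv j (fun t ↦ φ (ε⁻¹ * t)) t = 0 := by
  rw [iteratedDeriv_comp_const_mul (hφ.of_le (WithTop.coe_le_coe.2 le_top))]
  refine mul_eq_zero_of_right _ (iteratedDeriv_eq_zero_of_support_subset hφ hsupp j fun h ↦ ht ?_)
  rw [mem_Ioo, lt_inv_mul_iff₀ hε, inv_mul_lt_iff₀ hε] at h
  exact ⟨by linarith, by linarith⟩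

theorem abs_iteratedDeriv_comp_inv_mul_le {φ : ℝ → ℝ} (hφ : ContDiff ℝ (⊤ : ℕ∞) φ) {ε B : ℝ}
    (hε : 0 < ε) {k : ℕ} (hB : ∀ t, |iteratedDeriv k φ t| ≤ B) (ξ : ℝ) :
    |iteratedDeriv k (fun t ↦ φ (ε⁻¹ * t)) ξ| ≤ ε⁻¹ ^ k * B := by
  rw [iteratedDeriv_comp_const_mul (hφ.of_le (WithTop.coe_le_coe.2 le_top)), abs_mul, abs_pow,
    abs_inv, abs_of_pos hε]
  exact mul_le_mul_of_nonneg_left (hB _) (by positivity)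

theorem abs_intervalIntegral_mul_le {u v : ℝ → ℝ} {a b B : ℝ} (hab : a ≤ b) (hu : Continuous u)
    (hv : Continuous v) (hB : ∀ t, |u t| ≤ B) :
    |∫ t in a..b, u t * v t| ≤ B * ∫ t in a..b, |v t| :=
  calc |∫ t in a..b, u t * v t| ≤ ∫ t in a..b, |u t * v t| := abs_integral_le_integral_abs hab
    _ ≤ ∫ t in a..b, B * |v t| :=
        integral_mono_on hab ((hu.mul hv).abs.intervalIntegrable _ _)
          ((continuous_const.mul hv.abs).intervalIntegrable _ _) fun t _ ↦ by
          rw [abs_mul]; exact mul_le_mul_of_nonneg_right (hB t) (abs_nonneg _)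
    _ = B * ∫ t in a..b, |v t| := intervalIntegral.integral_const_mul _ _

theorem two_le_abs_of_notMem_Ioc {x : ℝ} (hx : x ∉ Ioc (-2) 2) : 2 ≤ |x| := by
  rw [mem_Ioc, not_and_or, not_lt, not_le] at hx
  exact le_abs'.2 (hx.imp id le_of_lt)

theorem integral_eq_abs_mul_integral_comp_mul_add (h : ℝ → ℝ) {x : ℝ} (hx : x ≠ 0) (γ : ℝ) :
    ∫ y, h y = |x| * ∫ ξ, h (ξ * x + γ) := by
  rw [Measure.integral_comp_mul_right (fun y ↦ h (y + γ)) x, integral_add_right_eq_self,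
    smul_eq_mul, abs_inv, mul_inv_cancel_left₀ (abs_ne_zero.2 hx)]

/-- Substitute `y = ξ x + γ`; the evenness of `φ` absorbs the sign of `x`. -/
theorem mean_eq_integral_comp_mul_add {φ : ℝ → ℝ} (hφ : ∀ t, φ (-t) = φ t) (ε γ : ℝ)
    (f : ℝ → ℝ → ℝ) {x : ℝ} (hx : x ≠ 0) :
    mean φ ε γ f x = ε⁻¹ * ∫ ξ, φ (ε⁻¹ * ξ) * f x (ξ * x + γ) := by
  have harg : ∀ ξ, φ ((γ - (ξ * x + γ)) / (ε * |x|)) = φ (ε⁻¹ * ξ) := fun ξ ↦ by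
    have : (γ - (ξ * x + γ)) / (ε * |x|) = -(ε⁻¹ * ξ) * (x * |x|⁻¹) := by
      rw [div_eq_mul_inv, mul_inv]; ring
    rcases hx.lt_or_gt with h | h
    · rw [this, abs_of_neg h, inv_neg, mul_neg, mul_inv_cancel₀ hx, mul_neg_one, neg_neg]
    · rw [this, abs_of_pos h, mul_inv_cancel₀ hx, mul_one, hφ]
  rw [mean, if_neg hx, integral_eq_abs_mul_integral_comp_mul_add _ hx γ]
  have hweight : ∀ ξ, f x (ξ * x + γ) * ((ε * |x|)⁻¹ * φ (ε⁻¹ * ξ)) =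
      |x|⁻¹ * (ε⁻¹ * (φ (ε⁻¹ * ξ) * f x (ξ * x + γ))) := fun ξ ↦ by
    rw [mul_inv]; ring
  simp only [harg, hweight, MeasureTheory.integral_const_mul,
    mul_inv_cancel_left₀ (abs_ne_zero.2 hx)]

/-- Truncating to `[-2, 2]` is harmless: for `f` supported above `y = x²`, `|ξ| ≤ 1` and `t ≤ 1`,
the line `y = ξ x + t` meets the support only over `[-2, 2]`, so for `k = 0` this is the Radon
transform. -/
noncomputable def radonPrimitive (f : ℝ → ℝ → ℝ) (k : ℕ) (ξ t : ℝ) : ℝ :=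
  ∫ x in (-2 : ℝ)..2, iteratedPrimitive (f x) k (ξ * x + t)

section ParabolaSupport

variable {f : ℝ → ℝ → ℝ}

theorem continuous_radonPrimitive (hf : Continuous (uncurry f)) (k : ℕ) :
    Continuous (uncurry (radonPrimitive f k)) :=
  continuous_parametric_intervalIntegral_of_continuous'
    (f := fun (p : ℝ × ℝ) x ↦ iteratedPrimitive (f x) k (p.1 * x + p.2))
    ((continuous_iteratedPrimitive_uncurry hf k).comp
      (continuous_snd.prodMk ((continuous_fst.fst.mul continuous_snd).add continuous_fst.snd))) _ _

variable (hsupp : ∀ x y : ℝ, y < x ^ 2 → f x y = 0)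
include hsupp

theorem eq_zero_of_le_sq (hf : Continuous (uncurry f)) {x y : ℝ} (hy : y ≤ x ^ 2) : f x y = 0 := by
  have hclosed : IsClosed {y | f x y = 0} :=
    isClosed_eq (hf.comp (Continuous.prodMk_right x)) continuous_const
  exact closure_minimal (fun y hy ↦ hsupp x y hy) hclosed (closure_Iio (x ^ 2) ▸ hy)

theorem apply_mul_add_eq_zero_of_two_le_abs {x ξ t : ℝ} (hξ : |ξ| ≤ 1) (ht : t ≤ 1) (hx : 2 ≤ |x|) :
    f x (ξ * x + t) = 0 := by
  refine hsupp x _ ?_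
  have : ξ * x ≤ |x| :=
    (le_abs_self _).trans (abs_mul ξ x ▸ mul_le_of_le_one_left (abs_nonneg x) hξ)
  nlinarith [sq_abs x]

theorem radon_eq_radonPrimitive_zero {ξ t : ℝ} (hξ : |ξ| ≤ 1) (ht : t ≤ 1) :
    radon f ξ t = radonPrimitive f 0 ξ t := by
  refine (integral_eq_integral_of_support_subset fun x hx ↦ ?_).symm
  by_contra hx'
  exact hx (apply_mul_add_eq_zero_of_two_le_abs hsupp hξ ht (two_le_abs_of_notMem_Ioc hx'))

/-- For `ξ² ≤ 4γ` the line `y = ξ x - γ` lies below the parabola, where all primitives of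
`f(x, ·)` vanish; so they may be taken from `ξ x - γ` instead of `0`. -/
theorem radonPrimitive_succ (hf : Continuous (uncurry f)) {ξ γ : ℝ} (hξ : ξ ^ 2 ≤ 4 * γ) {t : ℝ}
    (ht : -γ ≤ t) (k : ℕ) :
    radonPrimitive f (k + 1) ξ t = ∫ s in (-γ)..t, radonPrimitive f k ξ s := by
  have hline : ∀ x, iteratedPrimitive (f x) (k + 1) (ξ * x + t) =
      ∫ s in (-γ)..t, iteratedPrimitive (f x) k (ξ * x + s) := fun x ↦ by
    have hint : ∀ a b, IntervalIntegrable (iteratedPrimitive (f x) k) volume a b := fun a b ↦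
      (continuous_iteratedPrimitive (hf.comp (Continuous.prodMk_right x)) k).intervalIntegrable a b
    have hzero : iteratedPrimitive (f x) (k + 1) (ξ * x + -γ) = 0 :=
      iteratedPrimitive_eq_zero_of_le (sq_nonneg x) (fun y hy ↦ eq_zero_of_le_sq hsupp hf hy) _ _
        (by nlinarith [sq_nonneg (x - ξ / 2)])
    rw [integral_comp_add_left, ← sub_zero (iteratedPrimitive _ _ (ξ * x + t)), ← hzero]
    exact integral_interval_sub_left (hint _ _) (hint _ _)
  simp only [radonPrimitive, hline]
  exact intervalIntegral_integral_swap_of_continuous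
    (F := fun x s ↦ iteratedPrimitive (f x) k (ξ * x + s))
    ((continuous_iteratedPrimitive_uncurry hf k).comp
      (continuous_fst.prodMk ((continuous_const.mul continuous_fst).add continuous_snd)))
    (by norm_num) ht

theorem integral_abs_radonPrimitive_zero_le_dataNorm (hf : Continuous (uncurry f)) {ε γ η : ℝ}
    (hε0 : 0 ≤ ε) (hε : ε ≤ 1) (hγ : γ ≤ 1) (hη : η ∈ Icc (-γ) γ) :
    ∫ ξ in (-ε)..ε, |radonPrimitive f 0 ξ η| ≤ dataNorm (radon f) ε γ := by
  have hradon : ∀ η ∈ Icc (-γ) γ, ∫ ξ in Icc (-ε) ε, |radon f ξ η| =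
      ∫ ξ in Icc (-ε) ε, |radonPrimitive f 0 ξ η| := fun η hη ↦
    setIntegral_congr_fun measurableSet_Icc fun ξ hξ ↦ by
      rw [radon_eq_radonPrimitive_zero hsupp (abs_le.2 ⟨by linarith [hξ.1], by linarith [hξ.2]⟩)
        (hη.2.trans hγ)]
  have hcont : Continuous fun η ↦ ∫ ξ in Icc (-ε) ε, |radonPrimitive f 0 ξ η| :=
    continuous_parametric_integral_of_continuous (f := fun η ξ ↦ |radonPrimitive f 0 ξ η|)
      ((continuous_radonPrimitive hf 0).comp continuous_swap).abs isCompact_Icc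
  have hbdd : BddAbove (range fun η : Icc (-γ) γ ↦ ∫ ξ in Icc (-ε) ε, |radon f ξ η|) := by
    obtain ⟨M, hM⟩ := isCompact_Icc.bddAbove_image hcont.continuousOn
    refine ⟨M, ?_⟩
    rintro _ ⟨η, rfl⟩
    dsimp only
    rw [hradon η η.2]
    exact hM ⟨η, η.2, rfl⟩
  rw [integral_of_le (by linarith), ← integral_Icc_eq_integral_Ioc, ← hradon η hη]
  exact le_ciSup hbdd ⟨η, hη⟩

theorem integral_abs_radonPrimitive_le (hf : Continuous (uncurry f)) {ε γ D : ℝ} (hε0 : 0 ≤ ε)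
    (hεγ : ε ^ 2 ≤ 4 * γ) (hD : ∀ η ∈ Icc (-γ) γ, ∫ ξ in (-ε)..ε, |radonPrimitive f 0 ξ η| ≤ D)
    (k : ℕ) {t : ℝ} (ht : t ∈ Icc (-γ) γ) :
    ∫ ξ in (-ε)..ε, |radonPrimitive f k ξ t| ≤ (t + γ) ^ k / k.factorial * D := by
  induction k generalizing t with
  | zero => simpa using hD t ht
  | succ k ih =>
    have hcont := continuous_radonPrimitive hf k
    have hcont_abs : Continuous (uncurry fun ξ s ↦ |radonPrimitive f k ξ s|) := hcont.abs
    calc ∫ ξ in (-ε)..ε, |radonPrimitive f (k + 1) ξ t|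
        = ∫ ξ in (-ε)..ε, |∫ s in (-γ)..t, radonPrimitive f k ξ s| := by
          refine integral_congr fun ξ hξ ↦ ?_
          rw [uIcc_of_le (by linarith), mem_Icc] at hξ
          rw [radonPrimitive_succ hsupp hf (by nlinarith) ht.1]
      _ ≤ ∫ ξ in (-ε)..ε, ∫ s in (-γ)..t, |radonPrimitive f k ξ s| :=
          integral_mono_on (by linarith)
            (Continuous.intervalIntegrable
              (continuous_parametric_intervalIntegral_of_continuous' hcont _ _).abs _ _)
            (Continuous.intervalIntegrable
              (continuous_parametric_intervalIntegral_of_continuous' hcont_abs _ _) _ _)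
            fun ξ _ ↦ abs_integral_le_integral_abs ht.1
      _ = ∫ s in (-γ)..t, ∫ ξ in (-ε)..ε, |radonPrimitive f k ξ s| :=
          intervalIntegral_integral_swap_of_continuous hcont_abs (by linarith) ht.1
      _ ≤ ∫ s in (-γ)..t, (s + γ) ^ k / k.factorial * D :=
          integral_mono_on ht.1
            ((continuous_parametric_intervalIntegral_of_continuous'
              (f := fun s ξ ↦ |radonPrimitive f k ξ s|) (hcont_abs.comp continuous_swap) _ _
              ).intervalIntegrable _ _)
            (Continuous.intervalIntegrable (by fun_prop) _ _) fun s hs ↦ ih ⟨hs.1, hs.2.trans ht.2⟩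
      _ = (t + γ) ^ (k + 1) / (k + 1).factorial * D := by
          simp only [intervalIntegral.integral_mul_const, intervalIntegral.integral_div,
            integral_comp_add_right fun s ↦ s ^ k, neg_add_cancel, integral_pow, Nat.factorial_succ]
          push_cast
          field_simp
          ring

theorem integral_pow_mul_mean_eq {φ : ℝ → ℝ} (hφ : ContDiff ℝ (⊤ : ℕ∞) φ)
    (hφsupp : support φ ⊆ Icc (-1) 1) (hφeven : ∀ t, φ (-t) = φ t) (hf : Continuous (uncurry f))
    {ε γ : ℝ} (hε0 : 0 < ε) (hε1 : ε ≤ 1) (hγ : γ ≤ 1) (k : ℕ) :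
    ∫ x, x ^ k * mean φ ε γ f x = (-1) ^ k * ε⁻¹ *
      ∫ ξ in (-ε)..ε, iteratedDeriv k (fun t ↦ φ (ε⁻¹ * t)) ξ * radonPrimitive f k ξ γ := by
  set ψ : ℝ → ℝ := fun t ↦ φ (ε⁻¹ * t)
  have hψ : ContDiff ℝ (⊤ : ℕ∞) ψ := hφ.comp (contDiff_const.mul contDiff_id)
  have hψ0 : ∀ j t, t ∉ Ioo (-ε) ε → iteratedDeriv j ψ t = 0 := fun j _ ↦
    iteratedDeriv_comp_inv_mul_eq_zero hφ hφsupp hε0 j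
  have hfx : ∀ x, Continuous (f x) := fun x ↦ hf.comp (Continuous.prodMk_right x)
  have hmean : ∀ x ≠ 0, mean φ ε γ f x = ε⁻¹ * ∫ ξ in (-ε)..ε, ψ ξ * f x (ξ * x + γ) := by
    intro x hx
    rw [mean_eq_integral_comp_mul_add hφeven ε γ f hx,
      integral_eq_integral_of_support_subset fun ξ hξ ↦
        Ioo_subset_Ioc_self (by_contra fun h ↦ hξ ?_)]
    simpa using congrArg (· * f x (ξ * x + γ)) (hψ0 0 ξ h)
  have hvanish : ∀ x ∉ Ioc (-2 : ℝ) 2,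
      x ^ k * (ε⁻¹ * ∫ ξ in (-ε)..ε, ψ ξ * f x (ξ * x + γ)) = 0 := by
    intro x hx
    rw [integral_congr (g := fun _ ↦ 0) fun ξ hξ ↦ ?_, intervalIntegral.integral_zero, mul_zero,
      mul_zero]
    rw [uIcc_of_le (by linarith), mem_Icc] at hξ
    rw [apply_mul_add_eq_zero_of_two_le_abs hsupp (abs_le.2 ⟨by linarith, by linarith⟩) hγ
      (two_le_abs_of_notMem_Ioc hx), mul_zero]
  calc ∫ x, x ^ k * mean φ ε γ f x
      = ∫ x, x ^ k * (ε⁻¹ * ∫ ξ in (-ε)..ε, ψ ξ * f x (ξ * x + γ)) := by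
        refine integral_congr_ae ?_
        filter_upwards [Measure.ae_ne volume 0] with x hx
        rw [hmean x hx]
    _ = ∫ x in (-2 : ℝ)..2, x ^ k * (ε⁻¹ * ∫ ξ in (-ε)..ε, ψ ξ * f x (ξ * x + γ)) :=
        (integral_eq_integral_of_support_subset fun x hx ↦ by_contra (hx ∘ hvanish x)).symm
    _ = ∫ x in (-2 : ℝ)..2, (-1) ^ k * ε⁻¹ *
          ∫ ξ in (-ε)..ε, iteratedDeriv k ψ ξ * iteratedPrimitive (f x) k (ξ * x + γ) := by
        refine integral_congr fun x _ ↦ ?_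
        rw [mul_left_comm, pow_mul_integral_comp_mul_add hψ
          (fun j ↦ hψ0 j _ fun h ↦ lt_irrefl _ h.1) (fun j ↦ hψ0 j _ fun h ↦ lt_irrefl _ h.2)
          (hfx x)]
        ring
    _ = (-1) ^ k * ε⁻¹ * ∫ ξ in (-ε)..ε, iteratedDeriv k ψ ξ * radonPrimitive f k ξ γ := by
        rw [intervalIntegral.integral_const_mul, intervalIntegral_integral_swap_of_continuous
          (F := fun x ξ ↦ iteratedDeriv k ψ ξ * iteratedPrimitive (f x) k (ξ * x + γ)) ?_
          (by norm_num) (by linarith)]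
        · simp only [radonPrimitive, intervalIntegral.integral_const_mul]
        · exact ((hψ.continuous_iteratedDeriv k (WithTop.coe_le_coe.2 le_top)).comp
            continuous_snd).mul
            ((continuous_iteratedPrimitive_uncurry hf k).comp
              (continuous_fst.prodMk ((continuous_snd.mul continuous_fst).add continuous_const)))

end ParabolaSupport

theorem moment_constant_le {C₁ ε γ : ℝ} (hC₁ : 0 ≤ C₁) (hε : 0 < ε) (hγ0 : 0 ≤ γ) (hγ : γ ≤ 1)
    (N k : ℕ) :
    ε⁻¹ * (ε⁻¹ ^ k * (C₁ ^ (k + 1) * (N : ℝ) ^ k)) * ((γ + γ) ^ k / k.factorial) ≤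
      (2 * C₁ / ε) ^ (k + 1) * Real.exp N := by
  have h2γ : (γ + γ) ^ k ≤ 2 ^ (k + 1) :=
    (pow_le_pow_left₀ (by linarith) (by linarith : γ + γ ≤ 2) k).trans
      (pow_le_pow_right₀ one_le_two k.le_succ)
  calc ε⁻¹ * (ε⁻¹ ^ k * (C₁ ^ (k + 1) * (N : ℝ) ^ k)) * ((γ + γ) ^ k / k.factorial)
      = (C₁ / ε) ^ (k + 1) * ((γ + γ) ^ k * ((N : ℝ) ^ k / k.factorial)) := by
        rw [div_eq_mul_inv C₁, mul_pow, pow_succ]; ring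
    _ ≤ (C₁ / ε) ^ (k + 1) * (2 ^ (k + 1) * Real.exp N) := by
        gcongr
        exact Real.pow_div_factorial_le_exp _ (Nat.cast_nonneg N) k
    _ = (2 * C₁ / ε) ^ (k + 1) * Real.exp N := by rw [mul_div_assoc, mul_pow]; ring

theorem stmt5 (C₁ : ℝ) (hC₁ : 0 < C₁) :
    ∃ C > 0, ∀ φ : ℕ → ℝ → ℝ,
      (∀ N, ContDiff ℝ (⊤ : ℕ∞) (φ N)) →
      (∀ N, Function.support (φ N) ⊆ Icc (-1 : ℝ) 1) →
      (∀ N t, 0 ≤ φ N t) →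
      (∀ N t, φ N (-t) = φ N t) →
      (∀ N, (∫ t : ℝ, φ N t) = 1) →
      (∀ N k, k ≤ N → ∀ t, |iteratedDeriv k (φ N) t| ≤ C₁^(k+1) * (N : ℝ)^k) →
      ∀ f : ℝ → ℝ → ℝ, Continuous (fun p : ℝ × ℝ => f p.1 p.2) →
      (∀ x y : ℝ, y < x^2 → f x y = 0) →
      ∀ ε γ : ℝ, 0 < ε → ε < 1 → ε^2/4 ≤ γ → γ < 1 →
      ∀ N : ℕ, 1 ≤ N → ∀ k : ℕ, k ≤ N →
      |∫ x : ℝ, x^k * mean (φ N) ε γ f x| ≤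
        (C/ε)^(k+1) * Real.exp (N : ℝ) * dataNorm (radon f) ε γ := by
  refine ⟨2 * C₁, by positivity, ?_⟩
  intro φ hφ hφsupp _ hφeven _ hφbound f hf hsupp ε γ hε0 hε1 hγε hγ1 N _ k hk
  have hγ0 : 0 ≤ γ := (by positivity : 0 ≤ ε ^ 2 / 4).trans hγε
  have hD0 : 0 ≤ dataNorm (radon f) ε γ :=
    Real.iSup_nonneg fun _ ↦ integral_nonneg fun _ ↦ abs_nonneg _
  have hL1 := integral_abs_radonPrimitive_le hsupp hf hε0.le (by nlinarith)
    (fun η hη ↦ integral_abs_radonPrimitive_zero_le_dataNorm hsupp hf hε0.le hε1.le hγ1.le hη)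
    k ⟨by linarith, le_rfl⟩
  rw [integral_pow_mul_mean_eq hsupp (hφ N) (hφsupp N) (hφeven N) hf hε0 hε1.le hγ1.le k,
    abs_mul, abs_mul, abs_pow, abs_neg, abs_one, one_pow, one_mul, abs_inv, abs_of_pos hε0]
  calc ε⁻¹ * |∫ ξ in (-ε)..ε, iteratedDeriv k (fun t ↦ φ N (ε⁻¹ * t)) ξ * radonPrimitive f k ξ γ|
      ≤ ε⁻¹ * (ε⁻¹ ^ k * (C₁ ^ (k + 1) * (N : ℝ) ^ k) *
          ((γ + γ) ^ k / k.factorial * dataNorm (radon f) ε γ)) := by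
        gcongr
        refine (abs_intervalIntegral_mul_le (by linarith) ?_ ?_
          (abs_iteratedDeriv_comp_inv_mul_le (hφ N) hε0 (hφbound N k hk))).trans ?_
        · exact ((hφ N).comp (contDiff_const.mul contDiff_id)).continuous_iteratedDeriv k
            (WithTop.coe_le_coe.2 le_top)
        · exact (continuous_radonPrimitive hf k).comp (continuous_id.prodMk continuous_const)
        · gcongr
    _ ≤ (2 * C₁ / ε) ^ (k + 1) * Real.exp N * dataNorm (radon f) ε γ := by
        rw [← mul_assoc, ← mul_assoc]
        exact mul_le_mul_of_nonneg_right (moment_constant_le hC₁.le hε0 hγ0 hγ1.le N k) hD0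
end

section
/- Let m∈C^∞(ℝ³) and let a,b:ℝ²→ℝ be continuous functions such that ∂_ξ m(x,ξ,η) − x ∂_η m(x,ξ,η) = (x·a(ξ,η) + b(ξ,η))·m(x,ξ,η) for all (x,ξ,η). Let f∈C^∞(ℝ²) with supp f ⊂ {(x,y): y≥x²}. Then for all (ξ,η), ∂_ξ R_m[f](ξ,η) − b(ξ,η) R_m[f](ξ,η) = ∂_η R_m[xf](ξ,η) + a(ξ,η) R_m[xf](ξ,η), i.e. D_b R_m[f] = D_a R_m[xf]. -/
open MeasureTheory Set

/-- The weighted Radon transform `R_m[f](ξ,η) = ∫ f(x, ξx+η) m(x,ξ,η) dx`. -/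
noncomputable def radonW (f : ℝ → ℝ → ℝ) (m : ℝ → ℝ → ℝ → ℝ) (ξ η : ℝ) : ℝ :=
  ∫ x : ℝ, f x (ξ * x + η) * m x ξ η

/-- The weighted Radon transform of `x·f`:
`R_m[xf](ξ,η) = ∫ x f(x, ξx+η) m(x,ξ,η) dx`. -/
noncomputable def radonWx (f : ℝ → ℝ → ℝ) (m : ℝ → ℝ → ℝ → ℝ) (ξ η : ℝ) : ℝ :=
  ∫ x : ℝ, x * f x (ξ * x + η) * m x ξ η

/-!
Along the line `y = ξx + η` the operator `∂_ξ - x ∂_η` annihilates `f(x, ξx + η)`, so on the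
integrand `f(x, ξx + η) m(x, ξ, η)` it only acts on the weight, where the equation for `m` turns
it into multiplication by `x a + b`. Because `f` vanishes below the parabola `y = x²`, for `(ξ, η)`
in a bounded set the integrand vanishes once `|x|` is large, which justifies differentiating under
the integral sign; integrating the pointwise identity gives `D_b R_m[f] = D_a R_m[xf]`.
-/

open Function Metric Topology

section ParametricIntegral

variable {α E : Type*} [TopologicalSpace α] [T2Space α] [MeasurableSpace α] [OpensMeasurableSpace α]
  {μ : Measure α} [IsFiniteMeasureOnCompacts μ]
  [NormedAddCommGroup E] [NormedSpace ℝ E] [SecondCountableTopologyEither α E]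

theorem hasDerivAt_integral_of_continuous_deriv {g : α → ℝ → E} {K : Set α} {s₀ ε : ℝ}
    (hK : IsCompact K) (hε : 0 < ε) (hg : Continuous (uncurry g))
    (hg' : Continuous fun p : α × ℝ => deriv (g p.1) p.2)
    (hdiff : ∀ x, ∀ s ∈ ball s₀ ε, DifferentiableAt ℝ (g x) s)
    (hvanish : ∀ x ∉ K, ∀ s ∈ ball s₀ ε, g x s = 0) :
    Integrable (fun x => deriv (g x) s₀) μ ∧
      HasDerivAt (fun s => ∫ x, g x s ∂μ) (∫ x, deriv (g x) s₀ ∂μ) s₀ := by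
  have hslice : ∀ s, Continuous (g · s) := fun s => hg.comp (.prodMk_left s)
  have hderiv_vanish : ∀ x ∉ K, ∀ s ∈ ball s₀ ε, deriv (g x) s = 0 := fun x hx s hs => by
    have : g x =ᶠ[𝓝 s] fun _ => 0 :=
      Filter.eventually_of_mem (isOpen_ball.mem_nhds hs) (hvanish x hx)
    rw [this.deriv_eq, deriv_const]
  obtain ⟨C, hC⟩ := (hK.prod (isCompact_closedBall s₀ ε)).exists_bound_of_continuousOn
    hg'.continuousOn
  have hbound : ∀ x, ∀ s ∈ ball s₀ ε, ‖deriv (g x) s‖ ≤ K.indicator (fun _ => C) x := by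
    intro x s hs
    by_cases hx : x ∈ K
    · rw [indicator_of_mem hx]
      exact hC (x, s) ⟨hx, ball_subset_closedBall hs⟩
    · rw [indicator_of_notMem hx, hderiv_vanish x hx s hs, norm_zero]
  exact hasDerivAt_integral_of_dominated_loc_of_deriv_le (ball_mem_nhds s₀ hε)
    (.of_forall fun s => (hslice s).aestronglyMeasurable)
    ((hslice s₀).integrable_of_hasCompactSupport
      (HasCompactSupport.intro hK fun x hx => hvanish x hx s₀ (mem_ball_self hε)))
    (hg'.comp (.prodMk_left s₀)).aestronglyMeasurable (.of_forall hbound)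
    ((integrable_indicator_iff hK.measurableSet).2 (integrableOn_const hK.measure_ne_top))
    (.of_forall fun x s hs => (hdiff x s hs).hasDerivAt)

end ParametricIntegral

theorem ContDiff.continuous_deriv_snd {E F : Type*} [NormedAddCommGroup E] [NormedSpace ℝ E]
    [NormedAddCommGroup F] [NormedSpace ℝ F] {Φ : E × ℝ → F} (hΦ : ContDiff ℝ 1 Φ) :
    Continuous fun p : E × ℝ => deriv (fun u => Φ (p.1, u)) p.2 := by
  have hpartial : ∀ p : E × ℝ, deriv (fun u => Φ (p.1, u)) p.2 = fderiv ℝ Φ p (0, 1) :=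
    fun p => ((hΦ.differentiable one_ne_zero p).hasFDerivAt.comp_hasDerivAt p.2
      ((hasDerivAt_const p.2 p.1).prodMk (hasDerivAt_id p.2))).deriv
  simp_rw [hpartial]
  exact (hΦ.continuous_fderiv one_ne_zero).clm_apply continuous_const

noncomputable def radonIntegrand (f : ℝ → ℝ → ℝ) (m : ℝ → ℝ → ℝ → ℝ) (x ξ η : ℝ) : ℝ :=
  f x (ξ * x + η) * m x ξ η

section Radon

variable {f : ℝ → ℝ → ℝ} {m : ℝ → ℝ → ℝ → ℝ}

theorem radonW_eq_integral (ξ η : ℝ) : radonW f m ξ η = ∫ x, radonIntegrand f m x ξ η := rfl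

theorem radonWx_eq_integral (ξ η : ℝ) :
    radonWx f m ξ η = ∫ x, x * radonIntegrand f m x ξ η := by
  simp only [radonWx, radonIntegrand, mul_assoc]

theorem contDiff_radonIntegrand {n : WithTop ℕ∞}
    (hf : ContDiff ℝ n fun p : ℝ × ℝ => f p.1 p.2)
    (hm : ContDiff ℝ n fun p : ℝ × ℝ × ℝ => m p.1 p.2.1 p.2.2) :
    ContDiff ℝ n fun p : ℝ × ℝ × ℝ => radonIntegrand f m p.1 p.2.1 p.2.2 :=
  (hf.comp (by fun_prop : ContDiff ℝ n fun p : ℝ × ℝ × ℝ => (p.1, p.2.1 * p.1 + p.2.2))).mul hm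

theorem mul_add_lt_sq_of_mem_ball {ξ η s t x : ℝ} (hs : s ∈ ball ξ 1) (ht : t ∈ ball η 1)
    (hx : x ∉ closedBall 0 (|ξ| + |η| + 2)) : s * x + t < x ^ 2 := by
  rw [mem_ball, Real.dist_eq] at hs ht
  rw [mem_closedBall, dist_zero_right, Real.norm_eq_abs, not_le] at hx
  have hs' : |s| < |ξ| + 1 := by linarith [abs_sub_abs_le_abs_sub s ξ]
  have ht' : |t| < |η| + 1 := by linarith [abs_sub_abs_le_abs_sub t η]
  calc s * x + t ≤ |s| * |x| + |t| := by
        rw [← abs_mul]; exact add_le_add (le_abs_self _) (le_abs_self _)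
    _ < |x| * |x| := by nlinarith [abs_nonneg s, abs_nonneg t, abs_nonneg ξ, abs_nonneg η]
    _ = x ^ 2 := by rw [← sq, sq_abs]

theorem radonIntegrand_eq_zero (hsupp : ∀ x y : ℝ, y < x ^ 2 → f x y = 0) {ξ η s t x : ℝ}
    (hs : s ∈ ball ξ 1) (ht : t ∈ ball η 1) (hx : x ∉ closedBall 0 (|ξ| + |η| + 2)) :
    radonIntegrand f m x s t = 0 := by
  rw [radonIntegrand, hsupp _ _ (mul_add_lt_sq_of_mem_ball hs ht hx), zero_mul]

theorem hasDerivAt_radonW (hf : ContDiff ℝ 1 fun p : ℝ × ℝ => f p.1 p.2)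
    (hm : ContDiff ℝ 1 fun p : ℝ × ℝ × ℝ => m p.1 p.2.1 p.2.2)
    (hsupp : ∀ x y : ℝ, y < x ^ 2 → f x y = 0) (ξ η : ℝ) :
    HasDerivAt (fun s => radonW f m s η)
      (∫ x, deriv (fun s => radonIntegrand f m x s η) ξ) ξ := by
  have hF : ContDiff ℝ 1 fun p : ℝ × ℝ => radonIntegrand f m p.1 p.2 η :=
    (contDiff_radonIntegrand hf hm).comp (contDiff_fst.prodMk (contDiff_snd.prodMk contDiff_const))
  exact (hasDerivAt_integral_of_continuous_deriv (isCompact_closedBall 0 (|ξ| + |η| + 2)) one_pos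
    hF.continuous hF.continuous_deriv_snd
    (fun x s _ => (hF.differentiable one_ne_zero (x, s)).comp s (by fun_prop))
    (fun x hx s hs => radonIntegrand_eq_zero hsupp hs (mem_ball_self one_pos) hx)).2

theorem hasDerivAt_radonWx (hf : ContDiff ℝ 1 fun p : ℝ × ℝ => f p.1 p.2)
    (hm : ContDiff ℝ 1 fun p : ℝ × ℝ × ℝ => m p.1 p.2.1 p.2.2)
    (hsupp : ∀ x y : ℝ, y < x ^ 2 → f x y = 0) (ξ η : ℝ) :
    Integrable (fun x => deriv (fun t => x * radonIntegrand f m x ξ t) η) ∧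
      HasDerivAt (fun t => radonWx f m ξ t)
      (∫ x, deriv (fun t => x * radonIntegrand f m x ξ t) η) η := by
  have hF : ContDiff ℝ 1 fun p : ℝ × ℝ => p.1 * radonIntegrand f m p.1 ξ p.2 :=
    contDiff_fst.mul ((contDiff_radonIntegrand hf hm).comp
      (contDiff_fst.prodMk (contDiff_const.prodMk contDiff_snd)))
  simp_rw [radonWx_eq_integral]
  exact hasDerivAt_integral_of_continuous_deriv (isCompact_closedBall 0 (|ξ| + |η| + 2)) one_pos
    hF.continuous hF.continuous_deriv_snd
    (fun x t _ => (hF.differentiable one_ne_zero (x, t)).comp t (by fun_prop))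
    (fun x hx t ht => by rw [radonIntegrand_eq_zero hsupp (mem_ball_self one_pos) ht hx, mul_zero])

theorem integrable_mul_radonIntegrand {φ : ℝ → ℝ} (hφ : Continuous φ)
    (hf : Continuous fun p : ℝ × ℝ => f p.1 p.2)
    (hm : Continuous fun p : ℝ × ℝ × ℝ => m p.1 p.2.1 p.2.2)
    (hsupp : ∀ x y : ℝ, y < x ^ 2 → f x y = 0) (ξ η : ℝ) :
    Integrable fun x => φ x * radonIntegrand f m x ξ η := by
  refine (hφ.mul ?_).integrable_of_hasCompactSupport (HasCompactSupport.intro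
    (isCompact_closedBall 0 (|ξ| + |η| + 2)) fun x hx => ?_)
  · exact (hf.comp (by fun_prop : Continuous fun x => (x, ξ * x + η))).mul
      (hm.comp (by fun_prop : Continuous fun x => (x, ξ, η)))
  · show φ x * radonIntegrand f m x ξ η = 0
    rw [radonIntegrand_eq_zero hsupp (mem_ball_self one_pos) (mem_ball_self one_pos) hx, mul_zero]

theorem deriv_radonIntegrand_sub_mul_deriv (hf : Differentiable ℝ fun p : ℝ × ℝ => f p.1 p.2)
    (hm : Differentiable ℝ fun p : ℝ × ℝ × ℝ => m p.1 p.2.1 p.2.2) (x s t : ℝ) :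
    deriv (fun u => radonIntegrand f m x u t) s - x * deriv (fun u => radonIntegrand f m x s u) t =
      f x (s * x + t) * (deriv (fun u => m x u t) s - x * deriv (fun u => m x s u) t) := by
  have hfx : DifferentiableAt ℝ (f x) (s * x + t) :=
    (hf _).comp _ (by fun_prop : DifferentiableAt ℝ (fun y => (x, y)) _)
  have hmξ : DifferentiableAt ℝ (fun u => m x u t) s :=
    (hm _).comp _ (by fun_prop : DifferentiableAt ℝ (fun u => (x, u, t)) _)
  have hmη : DifferentiableAt ℝ (fun u => m x s u) t :=
    (hm _).comp _ (by fun_prop : DifferentiableAt ℝ (fun u => (x, s, u)) _)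
  have hfξ : HasDerivAt (fun u => f x (u * x + t)) (deriv (f x) (s * x + t) * x) s :=
    hfx.hasDerivAt.comp s ((hasDerivAt_mul_const x).add_const t)
  have hfη : HasDerivAt (fun u => f x (s * x + u)) (deriv (f x) (s * x + t)) t :=
    hfx.hasDerivAt.comp_const_add (s * x) t
  simp only [radonIntegrand]
  rw [(hfξ.fun_mul hmξ.hasDerivAt).deriv, (hfη.fun_mul hmη.hasDerivAt).deriv]
  ring

end Radon

theorem stmt11_general (m : ℝ → ℝ → ℝ → ℝ)
    (hm : ContDiff ℝ (⊤ : ℕ∞) (fun p : ℝ × ℝ × ℝ => m p.1 p.2.1 p.2.2))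
    (a b : ℝ → ℝ → ℝ)
    (hpde : ∀ x ξ η : ℝ,
      deriv (fun s => m x s η) ξ - x * deriv (fun t => m x ξ t) η =
        (x * a ξ η + b ξ η) * m x ξ η)
    (f : ℝ → ℝ → ℝ)
    (hf : ContDiff ℝ (⊤ : ℕ∞) (fun p : ℝ × ℝ => f p.1 p.2))
    (hsupp : ∀ x y : ℝ, y < x^2 → f x y = 0) :
    ∀ ξ η : ℝ,
      deriv (fun s => radonW f m s η) ξ - b ξ η * radonW f m ξ η =
        deriv (fun t => radonWx f m ξ t) η + a ξ η * radonWx f m ξ η := by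
  intro ξ η
  have hf₁ : ContDiff ℝ 1 fun p : ℝ × ℝ => f p.1 p.2 := hf.of_le (by exact_mod_cast le_top)
  have hm₁ : ContDiff ℝ 1 fun p : ℝ × ℝ × ℝ => m p.1 p.2.1 p.2.2 :=
    hm.of_le (by exact_mod_cast le_top)
  obtain ⟨hWx_int, hWx⟩ := hasDerivAt_radonWx hf₁ hm₁ hsupp ξ η
  have hF_int := integrable_mul_radonIntegrand (φ := fun _ => 1) continuous_const
    hf₁.continuous hm₁.continuous hsupp ξ η
  have hxF_int := integrable_mul_radonIntegrand (φ := fun x => x) continuous_id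
    hf₁.continuous hm₁.continuous hsupp ξ η
  simp only [one_mul] at hF_int
  have hpoint : ∀ x, deriv (fun s => radonIntegrand f m x s η) ξ =
      deriv (fun t => x * radonIntegrand f m x ξ t) η +
        (a ξ η * (x * radonIntegrand f m x ξ η) + b ξ η * radonIntegrand f m x ξ η) := fun x => by
    have h := deriv_radonIntegrand_sub_mul_deriv (hf₁.differentiable one_ne_zero)
      (hm₁.differentiable one_ne_zero) x ξ η
    rw [hpde] at h
    rw [deriv_const_mul_field, show radonIntegrand f m x ξ η = f x (ξ * x + η) * m x ξ η from rfl]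
    linear_combination h
  rw [(hasDerivAt_radonW hf₁ hm₁ hsupp ξ η).deriv, hWx.deriv,
    integral_congr_ae (.of_forall hpoint),
    integral_add hWx_int ((hxF_int.const_mul _).fun_add (hF_int.const_mul _)),
    integral_add (hxF_int.const_mul _) (hF_int.const_mul _), integral_const_mul,
    integral_const_mul, ← radonW_eq_integral, ← radonWx_eq_integral]
  ring

theorem stmt11 (m : ℝ → ℝ → ℝ → ℝ)
    (hm : ContDiff ℝ (⊤ : ℕ∞) (fun p : ℝ × ℝ × ℝ => m p.1 p.2.1 p.2.2))
    (a b : ℝ → ℝ → ℝ)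
    (ha : Continuous (fun p : ℝ × ℝ => a p.1 p.2))
    (hb : Continuous (fun p : ℝ × ℝ => b p.1 p.2))
    (hpde : ∀ x ξ η : ℝ,
      deriv (fun s => m x s η) ξ - x * deriv (fun t => m x ξ t) η =
        (x * a ξ η + b ξ η) * m x ξ η)
    (f : ℝ → ℝ → ℝ)
    (hf : ContDiff ℝ (⊤ : ℕ∞) (fun p : ℝ × ℝ => f p.1 p.2))
    (hsupp : ∀ x y : ℝ, y < x^2 → f x y = 0) :
    ∀ ξ η : ℝ,
      deriv (fun s => radonW f m s η) ξ - b ξ η * radonW f m ξ η =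
        deriv (fun t => radonWx f m ξ t) η + a ξ η * radonWx f m ξ η :=
  stmt11_general m hm a b hpde f hf hsupp
end
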